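/- For n ∈ ℤ define the Malmquist–Takenaka functions φₙ(x) = √(2/π) · iⁿ · (1 + 2ix)ⁿ / (1 − 2ix)^{n+1} for x ∈ ℝ. Then {φₙ}_{n∈ℤ} is an orthonormal system in L²(ℝ; ℂ): for all m, n ∈ ℤ, ∫_ℝ φₘ(x) conj(φₙ(x)) dx = δ_{m,n}. -/

import Mathlib

open MeasureTheory

/-- The Malmquist–Takenaka functions `φₙ(x) = √(2/π) iⁿ (1+2ix)ⁿ/(1−2ix)^{n+1}`, `n ∈ ℤ`. -/
noncomputable def malmquistTakenaka (n : ℤ) (x : ℝ) : ℂ :=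
  (Real.sqrt (2 / Real.pi) : ℂ) * Complex.I ^ n *
    (1 + 2 * Complex.I * x) ^ n / (1 - 2 * Complex.I * x) ^ (n + 1)

open Complex Set

lemma aux_ne_add (x : ℝ) : (1 + 2 * Complex.I * x : ℂ) ≠ 0 := by
  intro h
  have := congrArg Complex.re h
  simp [Complex.add_re, Complex.mul_re] at this

lemma aux_ne_sub (x : ℝ) : (1 - 2 * Complex.I * x : ℂ) ≠ 0 := by
  intro h
  have := congrArg Complex.re h
  simp [Complex.sub_re, Complex.mul_re] at this

lemma exp_two_arctan (t : ℝ) :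
    Complex.exp (2 * Complex.I * Real.arctan t) =
      (1 + 2 * Complex.I * ((t:ℂ)/2)) / (1 - 2 * Complex.I * ((t:ℂ)/2)) := by
  have hb : (1 - 2 * Complex.I * ((t:ℂ)/2)) ≠ 0 := by
    have := aux_ne_sub (t/2); push_cast at this; convert this using 2
  rw [eq_div_iff hb]
  have h1 : (2 * Complex.I * (Real.arctan t : ℂ)) = ((2 * Real.arctan t : ℝ) : ℂ) * Complex.I := by
    push_cast; ring
  rw [h1, Complex.exp_mul_I, ← Complex.ofReal_cos, ← Complex.ofReal_sin]
  have hc : Real.cos (2 * Real.arctan t) = Real.cos (Real.arctan t)^2 - Real.sin (Real.arctan t)^2 :=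
    Real.cos_two_mul' _
  have hs : Real.sin (2 * Real.arctan t) = 2 * Real.sin (Real.arctan t) * Real.cos (Real.arctan t) :=
    Real.sin_two_mul _
  have hpy : Real.sin (Real.arctan t)^2 + Real.cos (Real.arctan t)^2 = 1 := Real.sin_sq_add_cos_sq _
  have htn : Real.sin (Real.arctan t) = t * Real.cos (Real.arctan t) := by
    have h := Real.tan_arctan t
    rw [Real.tan_eq_sin_div_cos] at h
    field_simp [(Real.cos_arctan_pos t).ne'] at h
    linarith
  rw [hc, hs, htn]
  rw [htn] at hpy
  have hpyc := congrArg (Complex.ofReal) hpy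
  push_cast at hpyc ⊢
  linear_combination (1 + (t:ℂ) * Complex.I) * hpyc - 2 * (t:ℂ)^2 * (Complex.cos (Complex.arctan (t:ℂ)))^2 * Complex.I_sq


lemma mt_pointwise (m n : ℤ) (x : ℝ) :
    malmquistTakenaka m x * (starRingEnd ℂ) (malmquistTakenaka n x) =
      ((2 / Real.pi : ℝ) : ℂ) * Complex.I ^ (m - n) *
        Complex.exp ((m - n : ℤ) * (2 * Complex.I * Real.arctan (2 * x))) / (1 + 4 * x ^ 2) := by
  have ha := aux_ne_add x
  have hb := aux_ne_sub x
  have hI := Complex.I_ne_zero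
  have hconj : (starRingEnd ℂ) (malmquistTakenaka n x) =
      (Real.sqrt (2 / Real.pi) : ℂ) * (Complex.I)⁻¹ ^ n *
        (1 - 2 * Complex.I * x) ^ n / (1 + 2 * Complex.I * x) ^ (n + 1) := by
    unfold malmquistTakenaka
    simp only [map_div₀, map_zpow₀, map_mul, map_add, map_sub, map_one, map_ofNat,
      Complex.conj_I, Complex.conj_ofReal]
    rw [Complex.inv_I]
    ring_nf
  rw [hconj]
  have hexp : Complex.exp ((m - n : ℤ) * (2 * Complex.I * Real.arctan (2 * x))) =
      ((1 + 2 * Complex.I * x) / (1 - 2 * Complex.I * x)) ^ (m - n) := by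
    rw [Complex.exp_int_mul, exp_two_arctan]
    push_cast
    norm_num
  rw [hexp]
  have hab : (1 + 4 * (x:ℂ) ^ 2) = (1 + 2 * Complex.I * x) * (1 - 2 * Complex.I * x) := by
    linear_combination (4 * (x:ℂ)^2) * Complex.I_sq
  rw [hab]
  have hsq : ((Real.sqrt (2 / Real.pi)) : ℂ) * ((Real.sqrt (2 / Real.pi)) : ℂ) =
      ((2 / Real.pi : ℝ) : ℂ) := by
    rw [← Complex.ofReal_mul, Real.mul_self_sqrt (by positivity)]
  unfold malmquistTakenaka
  rw [div_zpow, zpow_sub₀ ha, zpow_sub₀ hb, zpow_sub₀ hI, zpow_add_one₀ ha, zpow_add_one₀ hb,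
    inv_zpow]
  rw [← hsq]
  field_simp [zpow_ne_zero _ ha, zpow_ne_zero _ hb, zpow_ne_zero _ hI]

/-- the Malmquist–Takenaka functions form an orthonormal system in `L²(ℝ; ℂ)`. -/
theorem mt_orthonormal (m n : ℤ) :
    ∫ x : ℝ, malmquistTakenaka m x * (starRingEnd ℂ) (malmquistTakenaka n x) = if m = n then 1 else 0 := by
  classical
  set g : ℝ → ℂ := fun x =>
    ((2 / Real.pi : ℝ) : ℂ) * Complex.I ^ (m - n) *
      Complex.exp ((m - n : ℤ) * (2 * Complex.I * Real.arctan (2 * x))) / (1 + 4 * x ^ 2) with hg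
  have hpt : ∀ x : ℝ, malmquistTakenaka m x * (starRingEnd ℂ) (malmquistTakenaka n x) = g x :=
    fun x => mt_pointwise m n x
  rw [show (fun x : ℝ => malmquistTakenaka m x * (starRingEnd ℂ) (malmquistTakenaka n x)) = g
      from funext hpt]
  set s : Set ℝ := Set.Ioo (-(Real.pi/2)) (Real.pi/2) with hsdef
  set f : ℝ → ℝ := fun u => Real.tan u / 2 with hf
  set f' : ℝ → ℝ := fun u => 1 / Real.cos u ^ 2 / 2 with hf'
  have hs : MeasurableSet s := measurableSet_Ioo
  have himg : f '' s = Set.univ := by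
    apply Set.eq_univ_of_forall
    intro y
    exact ⟨Real.arctan (2*y), ⟨Real.neg_pi_div_two_lt_arctan _, Real.arctan_lt_pi_div_two _⟩,
      by simp [hf, Real.tan_arctan]⟩
  have hderiv : ∀ u ∈ s, HasDerivWithinAt f (f' u) s u := by
    intro u hu
    exact ((Real.hasDerivAt_tan (Real.cos_pos_of_mem_Ioo hu).ne').div_const 2).hasDerivWithinAt
  have hinj : Set.InjOn f s := by
    intro u hu v hv h
    exact Real.injOn_tan hu hv (by simp only [hf] at h; linarith)
  have key : (∫ x : ℝ, g x) = ∫ u in s, |f' u| • g (f u) := by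
    rw [← MeasureTheory.setIntegral_univ, ← himg,
      MeasureTheory.integral_image_eq_integral_abs_deriv_smul hs hderiv hinj g]
  rw [key]
  set h : ℝ → ℂ := fun u =>
    ((Real.pi)⁻¹ : ℂ) * (Complex.I ^ (m - n) * Complex.exp ((2 * ((m:ℂ) - n) * Complex.I) * u))
    with hh
  have hcongr : ∫ u in s, |f' u| • g (f u) = ∫ u in s, h u := by
    apply MeasureTheory.setIntegral_congr_fun hs
    intro u hu
    have hcos : 0 < Real.cos u := Real.cos_pos_of_mem_Ioo hu
    have harctan : Real.arctan (2 * (Real.tan u / 2)) = u := by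
      rw [show 2 * (Real.tan u / 2) = Real.tan u by ring, Real.arctan_tan hu.1 hu.2]
    have habs : |f' u| = 1 / Real.cos u ^ 2 / 2 := by
      rw [hf', abs_of_pos (by positivity)]
    simp only [hg, hh, hf, hf', harctan]
    rw [habs]
    have hexparg : ((m - n : ℤ) : ℂ) * (2 * Complex.I * (u:ℝ)) =
        (2 * ((m:ℂ) - n) * Complex.I) * (u:ℝ) := by push_cast; ring
    rw [hexparg]
    have hden : (1 + 4 * ((Real.tan u / 2 : ℝ) : ℂ) ^ 2) = ((1/Real.cos u ^2 : ℝ) : ℂ) := by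
      have h1 : 1 + Real.tan u ^ 2 = 1 / Real.cos u ^ 2 := by
        rw [← Real.inv_one_add_tan_sq hcos.ne', one_div, inv_inv]
      rw [← h1]
      push_cast [-Complex.ofReal_cos]
      ring
    rw [hden, Complex.real_smul]
    have hπ : (Real.pi : ℂ) ≠ 0 := Complex.ofReal_ne_zero.mpr Real.pi_ne_zero
    have hcosC : ((Real.cos u : ℝ) : ℂ) ≠ 0 := Complex.ofReal_ne_zero.mpr hcos.ne'
    have hcosC' : Complex.cos (u:ℂ) ≠ 0 := by
      rw [← Complex.ofReal_cos]; exact hcosC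
    push_cast
    field_simp [hcosC', hπ]
  rw [hcongr]
  have hsplit : ∫ u in s, h u =
      ((Real.pi)⁻¹ : ℂ) * ∫ u in s, Complex.I ^ (m - n) *
        Complex.exp ((2 * ((m:ℂ) - n) * Complex.I) * u) := by
    simp only [hh]
    exact MeasureTheory.integral_const_mul _ _
  rw [hsplit]
  have hIoo : (∫ u in s, Complex.I ^ (m - n) * Complex.exp ((2 * ((m:ℂ) - n) * Complex.I) * u))
      = ∫ u in (-(Real.pi/2))..(Real.pi/2), Complex.I ^ (m - n) *
          Complex.exp ((2 * ((m:ℂ) - n) * Complex.I) * u) := by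
    rw [intervalIntegral.integral_of_le (by linarith [Real.pi_pos]),
      MeasureTheory.integral_Ioc_eq_integral_Ioo]
  rw [hIoo, intervalIntegral.integral_const_mul]
  by_cases hmn : m = n
  · subst hmn
    simp [Real.pi_ne_zero]
  · have hk : ((m:ℂ) - n) ≠ 0 := by
      rw [sub_ne_zero]
      exact_mod_cast fun h => hmn (by exact_mod_cast h)
    have hc : (2 * ((m:ℂ) - n) * Complex.I) ≠ 0 := by
      simp [hk, Complex.I_ne_zero]
    rw [integral_exp_mul_complex hc]
    have harg : (2 * ((m:ℂ) - n) * Complex.I) * ((Real.pi/2 : ℝ) : ℂ) =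
        (2 * ((m:ℂ) - n) * Complex.I) * ((-(Real.pi/2) : ℝ) : ℂ) +
          ((m - n : ℤ) : ℂ) * (2 * Real.pi * Complex.I) := by push_cast; ring
    rw [harg, Complex.exp_add, Complex.exp_int_mul_two_pi_mul_I, mul_one, sub_self, zero_div,
      mul_zero, mul_zero]
    simp [hmn]
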